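/- Let ABC be a hyperbolic triangle with A, B ideal (decorated by horocycles) and C ∈ ℍ², with signed side lengths a = |BC|, b = |CA|, c = |AB|, and let α_A be the length of the horocyclic arc at A inside the triangle. Then α_A² = e^{a−b−c} − e^{−2b}. -/

import Mathlib

/-- The Minkowski bilinear form on `ℝ^{1,2}`. -/
def mink (x y : Fin 3 → ℝ) : ℝ := -(x 0 * y 0) + x 1 * y 1 + x 2 * y 2

lemma mink_comm (x y : Fin 3 → ℝ) : mink x y = mink y x := by
  simp only [mink]; ring

lemma mink_lin (μ ν : ℝ) (x y z : Fin 3 → ℝ) :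
    mink (μ • x + ν • y) z = μ * mink x z + ν * mink y z := by
  simp only [mink, Pi.add_apply, Pi.smul_apply, smul_eq_mul]; ring

lemma mink_expand (μ ν μ' ν' : ℝ) (x y z w : Fin 3 → ℝ) :
    mink (μ • x + ν • y) (μ' • z + ν' • w) =
      μ * μ' * mink x z + μ * ν' * mink x w + ν * μ' * mink y z + ν * ν' * mink y w := by
  simp only [mink, Pi.add_apply, Pi.smul_apply, smul_eq_mul]; ring

/-- Horocyclic arc length in a triangle with two ideal decorated vertices `A`, `B`
(represented by future light-like vectors `lA`, `lB`) and one vertex `C` in the hyperbolic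
plane (represented by `xC` on the hyperboloid).  The signed side lengths are
`a = |BC|`, `b = |CA|` (signed distances to the horocycles, `⟨x, l⟩ = -e^{dist}`) and
`c = |AB|` (`⟨lA, lB⟩ = -2 e^c`).  The points `p, q` are the intersections of the horocycle
at `A` with the sides `AB`, `AC`, and `αA ≥ 0` is the horocyclic arc length between them
(`⟨p, q⟩ = -1 - αA²/2`).  Then `αA² = e^{a-b-c} - e^{-2b}`. -/
theorem semi_ideal_triangle_horocyclic_arc
    (lA lB xC p q : Fin 3 → ℝ) (a b c αA : ℝ)
    (hlA : mink lA lA = 0) (hlA0 : 0 < lA 0)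
    (hlB : mink lB lB = 0) (hlB0 : 0 < lB 0)
    (hxC : mink xC xC = -1) (hxC0 : 0 < xC 0)
    (hABind : ¬ ∃ t : ℝ, lB = t • lA)
    (ha : mink xC lB = -Real.exp a)
    (hb : mink xC lA = -Real.exp b)
    (hc : mink lA lB = -2 * Real.exp c)
    (hp : mink p p = -1) (hp0 : 0 < p 0) (hpA : mink p lA = -1)
    (hpAB : ∃ μ ν : ℝ, p = μ • lA + ν • lB)
    (hq : mink q q = -1) (hq0 : 0 < q 0) (hqA : mink q lA = -1)
    (hqAC : ∃ μ ν : ℝ, q = μ • lA + ν • xC)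
    (hα : 0 ≤ αA) (harc : mink p q = -1 - αA ^ 2 / 2) :
    αA ^ 2 = Real.exp (a - b - c) - Real.exp (-2 * b) := by
  obtain ⟨μ, ν, rfl⟩ := hpAB
  obtain ⟨μ', ν', rfl⟩ := hqAC
  have hC := Real.exp_pos c
  have hB := Real.exp_pos b
  set A := Real.exp a with hA
  set B := Real.exp b with hBdef
  set C := Real.exp c with hCdef
  have e1 : Real.exp (a - b - c) = A / (B * C) := by
    rw [Real.exp_sub, Real.exp_sub]; field_simp
    simp only [← hA, ← hBdef, ← hCdef]; ring
  have e2 : Real.exp (-2 * b) = 1 / B ^ 2 := by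
    rw [show (-2 : ℝ) * b = -(b + b) by ring, Real.exp_neg, Real.exp_add]
    field_simp; ring
  rw [e1, e2]
  have hBA : mink lB lA = -2 * C := by rw [mink_comm]; exact hc
  have hCA : mink xC lA = -B := hb
  have hAB : mink lA lB = -2 * C := hc
  have hAC : mink lA xC = -B := by rw [mink_comm]; exact hb
  have hCB : mink xC lB = -A := ha
  rw [mink_lin, hlA, hBA] at hpA
  rw [mink_lin, hlA, hCA] at hqA
  rw [mink_expand, hlA, hlB, hAB, hBA] at hp
  rw [mink_expand, hlA, hxC, hAC, hCA] at hq
  rw [mink_expand, hlA, hAC, hBA, mink_comm lB xC, hCB] at harc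
  -- coefficients
  have hν : ν = 1 / (2 * C) := by field_simp; linarith
  have hν' : ν' = 1 / B := by field_simp; linarith
  rw [hν] at hp harc
  rw [hν'] at hq harc
  have hμ : μ = 1 / 2 := by
    have h4 : (2 * μ) * (2 * C * (2 * C)) = 1 * (2 * C * (2 * C)) := by
      field_simp at hp; linarith
    have := mul_right_cancel₀ (by positivity : (2 * C * (2 * C)) ≠ 0) h4
    linarith
  rw [hμ] at harc
  field_simp at hq harc ⊢
  have key : (B ^ 2 * C * αA ^ 2 - (B * A - C)) * (8 * C) = 0 := by
    linear_combination 8 * C * (B * harc - C * hq)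
  rcases mul_eq_zero.mp key with h | h
  · linarith
  · exact absurd h (by positivity)
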